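/- arXiv:1905.13228 — 2 statements merged into one kernel-verified Lean document; each statement's English description precedes it below -/
import Mathlib

section
/- Let G be a finite (d_u, d_w)-regular bipartite graph with bipartition (U, W) and let {X_1, …, X_ℓ, Y} be a Godsil–McKay switching partition of its vertex set. If X_i is of Type 3.1 and X_j is of Type 3.2 (i ≠ j), then there is no edge of G between a vertex of X_i and a vertex of X_j. -/
open Finset SimpleGraph Polynomial

open scoped Classical in
/-- Number of neighbors of `v` inside the finset `S`, in the graph `G`. -/
noncomputable def nbrsIn {V : Type*} (G : SimpleGraph V) (v : V) (S : Finset V) : ℕ :=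
  (S.filter (fun w => G.Adj v w)).card

/-- The `i`-th part `X_i` of a partition of the vertex set encoded by `f`
(`f v = some i` means `v ∈ X_i`, and `f v = none` means `v ∈ Y`). -/
def Xset {V : Type*} [Fintype V] {ℓ : ℕ} (f : V → Option (Fin ℓ)) (i : Fin ℓ) : Finset V :=
  Finset.univ.filter (fun v => f v = some i)

/-- The part `Y` of the partition of the vertex set encoded by `f`. -/
def Yset {V : Type*} [Fintype V] {ℓ : ℕ} (f : V → Option (Fin ℓ)) : Finset V :=
  Finset.univ.filter (fun v => f v = none)

/-- The partition `{X_1, …, X_ℓ, Y}` (encoded by `f`) is a Godsil–McKay switching partition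
of `G`: every `y ∈ Y` has `0`, `|X_i|/2` or `|X_i|` neighbors in each `X_i`, and for all `i, j`,
all vertices of `X_i` have the same number of neighbors in `X_j`. -/
def IsGMPartition {V : Type*} [Fintype V] (G : SimpleGraph V) {ℓ : ℕ}
    (f : V → Option (Fin ℓ)) : Prop :=
  (∀ y ∈ Yset f, ∀ i : Fin ℓ,
      nbrsIn G y (Xset f i) = 0 ∨ 2 * nbrsIn G y (Xset f i) = (Xset f i).card ∨
        nbrsIn G y (Xset f i) = (Xset f i).card) ∧
  (∀ i j : Fin ℓ, ∀ u ∈ Xset f i, ∀ v ∈ Xset f i,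
      nbrsIn G u (Xset f j) = nbrsIn G v (Xset f j))

/-- The pairs of vertices whose adjacency is flipped by the Godsil–McKay switching:
one of them lies in `Y`, the other in some `X_i`, and the former has exactly `|X_i|/2`
neighbors in `X_i`. -/
def gmFlip {V : Type*} [Fintype V] (G : SimpleGraph V) {ℓ : ℕ} (f : V → Option (Fin ℓ))
    (u v : V) : Prop :=
  (∃ i : Fin ℓ, f u = none ∧ f v = some i ∧ 2 * nbrsIn G u (Xset f i) = (Xset f i).card) ∨
  (∃ i : Fin ℓ, f v = none ∧ f u = some i ∧ 2 * nbrsIn G v (Xset f i) = (Xset f i).card)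

/-- The Godsil–McKay switched graph `G'`: adjacency within `X_1 ∪ … ∪ X_ℓ`, or within `Y`,
is as in `G`; adjacency between `y ∈ Y` and `x ∈ X_i` is complemented exactly when `y` has
`|X_i|/2` neighbors in `X_i` in `G`. -/
def gmSwitch {V : Type*} [Fintype V] (G : SimpleGraph V) {ℓ : ℕ} (f : V → Option (Fin ℓ)) :
    SimpleGraph V where
  Adj u v := (gmFlip G f u v ∧ ¬ G.Adj u v ∧ u ≠ v) ∨ (¬ gmFlip G f u v ∧ G.Adj u v)
  symm := by
    constructor
    intro u v h
    have hsymm : gmFlip G f u v ↔ gmFlip G f v u := ⟨Or.symm, Or.symm⟩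
    rcases h with ⟨h1, h2, h3⟩ | ⟨h1, h2⟩
    · exact Or.inl ⟨hsymm.mp h1, fun h => h2 (G.adj_symm h), h3.symm⟩
    · exact Or.inr ⟨fun h => h1 (hsymm.mpr h), G.adj_symm h2⟩
  loopless := by
    constructor
    intro u h
    rcases h with ⟨_, _, h3⟩ | ⟨_, h2⟩
    · exact h3 rfl
    · exact G.loopless.irrefl u h2

/-- `(U, W)` is a bipartition of the vertex set of `G` witnessing that `G` is a
`(du, dw)`-regular bipartite graph: every edge joins `U` to `W`, every vertex of `U` has
degree `du`, and every vertex of `W` has degree `dw`. -/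
def IsBiRegularBipartition {V : Type*} [Fintype V] [DecidableEq V] (G : SimpleGraph V)
    (U W : Finset V) (du dw : ℕ) : Prop :=
  U ∪ W = Finset.univ ∧ U ∩ W = ∅ ∧
  (∀ u v, G.Adj u v → (u ∈ U ∧ v ∈ W) ∨ (u ∈ W ∧ v ∈ U)) ∧
  (∀ u ∈ U, nbrsIn G u Finset.univ = du) ∧
  (∀ w ∈ W, nbrsIn G w Finset.univ = dw)

/-! Let `c` be the number of neighbours in `X_j` of a vertex of `X_i` and `c'` the number of
neighbours in `X_i` of a vertex of `X_j`. Counting the edges between `X_i ∩ U` and `X_j ∩ W`,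
and between `X_i ∩ W` and `X_j ∩ U`, gives `|X_i ∩ U| c = |X_j ∩ W| c'` and
`|X_i ∩ W| c = |X_j ∩ U| c'`. As `|X_i ∩ U| = |X_i ∩ W|` but `|X_j ∩ U| ≠ |X_j ∩ W|`, this forces
`c' = 0`, hence `c = 0`. -/

section nbrsIn

variable {V : Type*} (G : SimpleGraph V)

theorem sum_nbrsIn_comm (A B : Finset V) :
    ∑ a ∈ A, nbrsIn G a B = ∑ b ∈ B, nbrsIn G b A := by
  classical
  simp only [nbrsIn, card_filter]
  rw [sum_comm]
  simp only [G.adj_comm]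

theorem nbrsIn_eq_zero_iff {v : V} {S : Finset V} :
    nbrsIn G v S = 0 ↔ ∀ w ∈ S, ¬ G.Adj v w := by
  simp only [nbrsIn, card_eq_zero, filter_eq_empty_iff]

theorem nbrsIn_inter_of_forall_adj_mem [DecidableEq V] {v : V} {T : Finset V}
    (h : ∀ w, G.Adj v w → w ∈ T) (S : Finset V) :
    nbrsIn G v (S ∩ T) = nbrsIn G v S := by
  classical
  unfold nbrsIn
  rw [← filter_inter, inter_eq_left.mpr]
  intro w hw
  exact h w (mem_filter.mp hw).2

end nbrsIn

section Bipartite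

variable {V : Type*} {G : SimpleGraph V} {U W : Finset V}

theorem mem_right_of_adj_of_mem_left (hUW : Disjoint U W)
    (hG : ∀ u v, G.Adj u v → (u ∈ U ∧ v ∈ W) ∨ (u ∈ W ∧ v ∈ U))
    {u v : V} (hu : u ∈ U) (huv : G.Adj u v) : v ∈ W := by
  rcases hG u v huv with ⟨-, hv⟩ | ⟨hu', -⟩
  · exact hv
  · exact absurd hu' (disjoint_left.mp hUW hu)

theorem card_inter_mul_eq_of_nbrsIn_eq [DecidableEq V] (hUW : Disjoint U W)
    (hG : ∀ u v, G.Adj u v → (u ∈ U ∧ v ∈ W) ∨ (u ∈ W ∧ v ∈ U))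
    {A B : Finset V} {c c' : ℕ} (hA : ∀ a ∈ A, nbrsIn G a B = c)
    (hB : ∀ b ∈ B, nbrsIn G b A = c') :
    #(A ∩ U) * c = #(B ∩ W) * c' := by
  have hWU : ∀ u v, G.Adj u v → (u ∈ W ∧ v ∈ U) ∨ (u ∈ U ∧ v ∈ W) :=
    fun u v huv => (hG u v huv).symm
  calc #(A ∩ U) * c = ∑ a ∈ A ∩ U, nbrsIn G a (B ∩ W) := by
        refine (sum_const_nat fun a ha => ?_).symm
        rw [mem_inter] at ha
        rw [nbrsIn_inter_of_forall_adj_mem G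
          (fun w => mem_right_of_adj_of_mem_left hUW hG ha.2), hA a ha.1]
    _ = ∑ b ∈ B ∩ W, nbrsIn G b (A ∩ U) := sum_nbrsIn_comm G _ _
    _ = #(B ∩ W) * c' := by
        refine sum_const_nat fun b hb => ?_
        rw [mem_inter] at hb
        rw [nbrsIn_inter_of_forall_adj_mem G
          (fun w => mem_right_of_adj_of_mem_left hUW.symm hWU hb.2), hB b hb.1]

end Bipartite

theorem gm_no_edge_type31_type32_general {V : Type*} [Fintype V] [DecidableEq V]
    (G : SimpleGraph V) (U W : Finset V) (du dw : ℕ)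
    (hG : IsBiRegularBipartition G U W du dw)
    {ℓ : ℕ} (f : V → Option (Fin ℓ)) (hf : IsGMPartition G f)
    (i j : Fin ℓ)
    (h31 : (Xset f i ∩ U).Nonempty ∧ (Xset f i ∩ W).Nonempty ∧
      (Xset f i ∩ U).card = (Xset f i ∩ W).card)
    (h32 : (Xset f j ∩ U).Nonempty ∧ (Xset f j ∩ W).Nonempty ∧
      (Xset f j ∩ U).card ≠ (Xset f j ∩ W).card) :
    ∀ u ∈ Xset f i, ∀ v ∈ Xset f j, ¬ G.Adj u v := by
  obtain ⟨-, hUW, hbip, -, -⟩ := hG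
  have hdisj : Disjoint U W := disjoint_iff_inter_eq_empty.mpr hUW
  obtain ⟨⟨u₀, hu₀⟩, -, hi⟩ := h31
  obtain ⟨⟨v₀, hv₀⟩, -, hj⟩ := h32
  have hc : ∀ u ∈ Xset f i, nbrsIn G u (Xset f j) = nbrsIn G u₀ (Xset f j) :=
    fun u hu => hf.2 i j u hu u₀ (mem_inter.mp hu₀).1
  have hc' : ∀ v ∈ Xset f j, nbrsIn G v (Xset f i) = nbrsIn G v₀ (Xset f i) :=
    fun v hv => hf.2 j i v hv v₀ (mem_inter.mp hv₀).1
  have hUW_count := card_inter_mul_eq_of_nbrsIn_eq hdisj hbip hc hc'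
  have hWU_count := card_inter_mul_eq_of_nbrsIn_eq hdisj.symm
    (fun u v huv => (hbip u v huv).symm) hc hc'
  have hc'_zero : nbrsIn G v₀ (Xset f i) = 0 := by
    by_contra hne
    exact hj (Nat.eq_of_mul_eq_mul_right (Nat.pos_of_ne_zero hne)
      (by rw [← hUW_count, ← hWU_count, hi]))
  have hc_zero : nbrsIn G u₀ (Xset f j) = 0 := by
    rw [hc'_zero, mul_zero, mul_eq_zero] at hUW_count
    exact hUW_count.resolve_left (card_pos.mpr ⟨u₀, hu₀⟩).ne'
  intro u hu
  exact (nbrsIn_eq_zero_iff G).mp ((hc u hu).trans hc_zero)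

/-- Property P2: in a `(du, dw)`-regular bipartite graph with a Godsil–McKay switching
partition, there is no edge between a Type-3.1 set `X_i` (meeting both `U` and `W`, with
`|X_i ∩ U| = |X_i ∩ W|`) and a Type-3.2 set `X_j` (meeting both `U` and `W`, with
`|X_j ∩ U| ≠ |X_j ∩ W|`). -/
theorem gm_no_edge_type31_type32 {V : Type*} [Fintype V] [DecidableEq V]
    (G : SimpleGraph V) (U W : Finset V) (du dw : ℕ)
    (hG : IsBiRegularBipartition G U W du dw)
    {ℓ : ℕ} (f : V → Option (Fin ℓ)) (hf : IsGMPartition G f)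
    (i j : Fin ℓ) (hij : i ≠ j)
    (h31 : (Xset f i ∩ U).Nonempty ∧ (Xset f i ∩ W).Nonempty ∧
      (Xset f i ∩ U).card = (Xset f i ∩ W).card)
    (h32 : (Xset f j ∩ U).Nonempty ∧ (Xset f j ∩ W).Nonempty ∧
      (Xset f j ∩ U).card ≠ (Xset f j ∩ W).card) :
    ∀ u ∈ Xset f i, ∀ v ∈ Xset f j, ¬ G.Adj u v :=
  gm_no_edge_type31_type32_general G U W du dw hG f hf i j h31 h32
end

section
/- Let G be a finite (d_u, d_w)-regular bipartite graph with bipartition (U, W) such that d_u ≠ d_w, and let {X_1, …, X_ℓ, Y} be a Godsil–McKay switching partition of its vertex set. Then no set X_i is of Type 3.2; that is, every X_i satisfies X_i ⊆ U, or X_i ⊆ W, or |X_i ∩ U| = |X_i ∩ W|. -/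
open Finset SimpleGraph Polynomial

/-!
Suppose `0 < |X_i ∩ U| < |X_i ∩ W|`. A vertex of `Y ∩ W` has fewer than `|X_i| / 2` neighbours
in `X_i`, hence none; so the vertices of `X_i ∩ U` have all their neighbours in the `X_j`, and
comparing one of them with a vertex of `X_i ∩ W` gives `du ≤ dw`. Counting the edges between
`X_i` and a part `X_j` that its `U`-vertices see shows that `X_j` is unbalanced the other way,
which by the same argument gives `dw ≤ du`.
-/

section NbrsIn

variable {V : Type*} (G : SimpleGraph V)

theorem nbrsIn_le_card (v : V) (S : Finset V) : nbrsIn G v S ≤ S.card := by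
  classical
  exact card_filter_le _ _

theorem nbrsIn_pos_iff {v : V} {S : Finset V} : 0 < nbrsIn G v S ↔ ∃ w ∈ S, G.Adj v w := by
  simp only [nbrsIn, card_pos, filter_nonempty_iff]

theorem sum_nbrsIn_comm_s8 (S T : Finset V) :
    ∑ v ∈ S, nbrsIn G v T = ∑ w ∈ T, nbrsIn G w S := by
  classical
  simpa only [bipartiteAbove, bipartiteBelow, G.adj_comm _ _, nbrsIn] using
    sum_card_bipartiteAbove_eq_sum_card_bipartiteBelow (s := S) (t := T) G.Adj

theorem nbrsIn_univ_eq_add_sum [Fintype V] {ℓ : ℕ} (f : V → Option (Fin ℓ)) (v : V) :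
    nbrsIn G v univ = nbrsIn G v (Yset f) + ∑ j, nbrsIn G v (Xset f j) := by
  classical
  simp only [nbrsIn, card_filter]
  rw [← sum_fiberwise univ f, Fintype.sum_option]
  rfl

end NbrsIn

theorem IsGMPartition.sum_nbrsIn_eq_card_mul {V : Type*} [Fintype V] {G : SimpleGraph V}
    {ℓ : ℕ} {f : V → Option (Fin ℓ)} (hf : IsGMPartition G f) {i : Fin ℓ} {T : Finset V}
    (hT : T ⊆ Xset f i) {u : V} (hu : u ∈ Xset f i) (j : Fin ℓ) :
    ∑ v ∈ T, nbrsIn G v (Xset f j) = T.card * nbrsIn G u (Xset f j) := by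
  rw [sum_congr rfl fun v hv => hf.2 i j v (hT hv) u hu, sum_const, smul_eq_mul]

namespace IsBiRegularBipartition

variable {V : Type*} [Fintype V] [DecidableEq V] {G : SimpleGraph V} {U W : Finset V}
  {du dw : ℕ}

theorem swap (hG : IsBiRegularBipartition G U W du dw) : IsBiRegularBipartition G W U dw du :=
  ⟨union_comm U W ▸ hG.1, inter_comm U W ▸ hG.2.1, fun u v h => (hG.2.2.1 u v h).symm,
    hG.2.2.2.2, hG.2.2.2.1⟩

theorem disjoint (hG : IsBiRegularBipartition G U W du dw) : Disjoint U W :=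
  disjoint_iff_inter_eq_empty.mpr hG.2.1

theorem mem_right_of_adj (hG : IsBiRegularBipartition G U W du dw) {u w : V} (hu : u ∈ U)
    (hadj : G.Adj u w) : w ∈ W := by
  rcases hG.2.2.1 u w hadj with ⟨-, hw⟩ | ⟨huW, -⟩
  · exact hw
  · exact absurd huW (disjoint_left.mp hG.disjoint hu)

theorem nbrsIn_inter_right (hG : IsBiRegularBipartition G U W du dw) {u : V} (hu : u ∈ U)
    (S : Finset V) : nbrsIn G u (S ∩ W) = nbrsIn G u S := by
  unfold nbrsIn
  congr 1
  ext w
  simp only [mem_filter, mem_inter]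
  exact ⟨fun ⟨⟨hw, _⟩, hadj⟩ => ⟨hw, hadj⟩,
    fun ⟨hw, hadj⟩ => ⟨⟨hw, hG.mem_right_of_adj hu hadj⟩, hadj⟩⟩

theorem card_inter_add_card_inter (hG : IsBiRegularBipartition G U W du dw) (S : Finset V) :
    (S ∩ U).card + (S ∩ W).card = S.card := by
  rw [← card_union_of_disjoint (disjoint_of_subset_left inter_subset_right
    (disjoint_of_subset_right inter_subset_right hG.disjoint)),
    ← inter_union_distrib_left, hG.1, inter_univ]

theorem inter_left_nonempty_of_not_subset_right (hG : IsBiRegularBipartition G U W du dw)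
    {S : Finset V} (hS : ¬ S ⊆ W) : (S ∩ U).Nonempty := by
  obtain ⟨v, hvS, hvW⟩ := not_subset.mp hS
  have hv : v ∈ U ∪ W := hG.1 ▸ mem_univ v
  exact ⟨v, mem_inter.mpr ⟨hvS, (mem_union.mp hv).resolve_right hvW⟩⟩

/-- Both sides count the edges of `G`. -/
theorem card_mul_eq_card_mul (hG : IsBiRegularBipartition G U W du dw) :
    U.card * du = W.card * dw := by
  calc U.card * du = ∑ u ∈ U, nbrsIn G u W := by
        rw [← smul_eq_mul, ← sum_const, sum_congr rfl fun u hu => ?_]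
        rw [← hG.2.2.2.1 u hu, ← hG.nbrsIn_inter_right hu univ, univ_inter]
    _ = ∑ w ∈ W, nbrsIn G w U := sum_nbrsIn_comm_s8 G U W
    _ = W.card * dw := by
        rw [← smul_eq_mul, ← sum_const, sum_congr rfl fun w hw => ?_]
        rw [← hG.2.2.2.2 w hw, ← hG.swap.nbrsIn_inter_right hw univ, univ_inter]

variable {ℓ : ℕ} {f : V → Option (Fin ℓ)} {i : Fin ℓ}

theorem card_inter_mul_nbrsIn_eq (hG : IsBiRegularBipartition G U W du dw)
    (hf : IsGMPartition G f) {j : Fin ℓ} {u x : V} (hu : u ∈ Xset f i) (hx : x ∈ Xset f j) :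
    (Xset f i ∩ U).card * nbrsIn G u (Xset f j) =
      (Xset f j ∩ W).card * nbrsIn G x (Xset f i) := by
  calc (Xset f i ∩ U).card * nbrsIn G u (Xset f j)
      = ∑ v ∈ Xset f i ∩ U, nbrsIn G v (Xset f j ∩ W) := by
        rw [← hf.sum_nbrsIn_eq_card_mul inter_subset_left hu]
        exact sum_congr rfl fun v hv => (hG.nbrsIn_inter_right (mem_inter.mp hv).2 _).symm
    _ = ∑ w ∈ Xset f j ∩ W, nbrsIn G w (Xset f i ∩ U) := sum_nbrsIn_comm_s8 G _ _
    _ = (Xset f j ∩ W).card * nbrsIn G x (Xset f i) := by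
        rw [← hf.sum_nbrsIn_eq_card_mul inter_subset_left hx]
        exact sum_congr rfl fun w hw => hG.swap.nbrsIn_inter_right (mem_inter.mp hw).2 _

theorem nbrsIn_Yset_eq_zero (hG : IsBiRegularBipartition G U W du dw)
    (hf : IsGMPartition G f) (hlt : (Xset f i ∩ U).card < (Xset f i ∩ W).card) {u : V}
    (hu : u ∈ Xset f i ∩ U) : nbrsIn G u (Yset f) = 0 := by
  obtain ⟨huX, huU⟩ := mem_inter.mp hu
  by_contra hne
  obtain ⟨y, hyY, hadj⟩ := (nbrsIn_pos_iff G).mp (Nat.pos_of_ne_zero hne)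
  have hpos : 0 < nbrsIn G y (Xset f i) := (nbrsIn_pos_iff G).mpr ⟨u, huX, hadj.symm⟩
  have hle : nbrsIn G y (Xset f i) ≤ (Xset f i ∩ U).card := by
    rw [← hG.swap.nbrsIn_inter_right (hG.mem_right_of_adj huU hadj)]
    exact nbrsIn_le_card G y _
  have hcard := hG.card_inter_add_card_inter (Xset f i)
  rcases hf.1 y hyY i with h | h | h <;> omega

theorem left_degree_eq_sum (hG : IsBiRegularBipartition G U W du dw)
    (hf : IsGMPartition G f) (hlt : (Xset f i ∩ U).card < (Xset f i ∩ W).card) {u : V}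
    (hu : u ∈ Xset f i ∩ U) : du = ∑ j, nbrsIn G u (Xset f j) := by
  rw [← hG.2.2.2.1 u (mem_inter.mp hu).2, nbrsIn_univ_eq_add_sum G f,
    hG.nbrsIn_Yset_eq_zero hf hlt hu, zero_add]

theorem left_degree_le_right_degree (hG : IsBiRegularBipartition G U W du dw)
    (hf : IsGMPartition G f) (hlt : (Xset f i ∩ U).card < (Xset f i ∩ W).card) {u : V}
    (hu : u ∈ Xset f i ∩ U) : du ≤ dw := by
  obtain ⟨w, hw⟩ := card_pos.mp (lt_of_le_of_lt (Nat.zero_le _) hlt)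
  obtain ⟨hwX, hwW⟩ := mem_inter.mp hw
  rw [hG.left_degree_eq_sum hf hlt hu, ← hG.2.2.2.2 w hwW, nbrsIn_univ_eq_add_sum G f]
  exact le_add_left (sum_le_sum fun j _ => (hf.2 i j w hwX u (mem_inter.mp hu).1).ge)

/-- With `c_ij` the number of neighbours in `X_j` of a vertex of `X_i`, pick `j` with
`c_ij > 0`: then `|X_i ∩ U| c_ij = |X_j ∩ W| c_ji` and `|X_i ∩ W| c_ij = |X_j ∩ U| c_ji`. -/
theorem not_card_inter_lt (hG : IsBiRegularBipartition G U W du dw) (hdeg : du ≠ dw)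
    (hf : IsGMPartition G f) (hU : (Xset f i ∩ U).Nonempty) :
    ¬ (Xset f i ∩ U).card < (Xset f i ∩ W).card := by
  intro hlt
  obtain ⟨u, hu⟩ := hU
  have hle : du ≤ dw := hG.left_degree_le_right_degree hf hlt hu
  have hdu : du ≠ 0 := by
    rintro rfl
    have hW : 0 < W.card :=
      ((Nat.zero_le _).trans_lt hlt).trans_le (card_le_card inter_subset_right)
    have h := hG.card_mul_eq_card_mul
    rw [mul_zero, eq_comm, mul_eq_zero] at h
    omega
  obtain ⟨j, -, hj⟩ := exists_ne_zero_of_sum_ne_zero (hG.left_degree_eq_sum hf hlt hu ▸ hdu)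
  obtain ⟨x, hx, -⟩ := (nbrsIn_pos_iff G).mp (Nat.pos_of_ne_zero hj)
  have e₁ := hG.card_inter_mul_nbrsIn_eq hf (mem_inter.mp hu).1 hx
  have e₂ := hG.swap.card_inter_mul_nbrsIn_eq hf (mem_inter.mp hu).1 hx
  have hposU : 0 < (Xset f i ∩ U).card := card_pos.mpr ⟨u, hu⟩
  have hlt' : (Xset f j ∩ W).card < (Xset f j ∩ U).card := by
    refine Nat.lt_of_mul_lt_mul_right (a := nbrsIn G x (Xset f i)) ?_
    rw [← e₁, ← e₂]
    exact Nat.mul_lt_mul_of_pos_right hlt (Nat.pos_of_ne_zero hj)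
  have hW : (Xset f j ∩ W).Nonempty := by
    refine card_pos.mp (Nat.pos_of_ne_zero fun h0 => ?_)
    rw [h0, zero_mul, mul_eq_zero] at e₁
    omega
  obtain ⟨w, hw⟩ := hW
  have hge : dw ≤ du := hG.swap.left_degree_le_right_degree hf hlt' hw
  omega

end IsBiRegularBipartition

/-- In a `(du, dw)`-regular bipartite graph with `du ≠ dw`, a Godsil–McKay switching
partition has no Type-3.2 set: every `X_i` satisfies `X_i ⊆ U`, or `X_i ⊆ W`, or
`|X_i ∩ U| = |X_i ∩ W|`. -/
theorem gm_no_type32_of_ne_degrees {V : Type*} [Fintype V] [DecidableEq V]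
    (G : SimpleGraph V) (U W : Finset V) (du dw : ℕ)
    (hG : IsBiRegularBipartition G U W du dw) (hdeg : du ≠ dw)
    {ℓ : ℕ} (f : V → Option (Fin ℓ)) (hf : IsGMPartition G f) :
    ∀ i : Fin ℓ, Xset f i ⊆ U ∨ Xset f i ⊆ W ∨
      (Xset f i ∩ U).card = (Xset f i ∩ W).card := by
  intro i
  by_contra! ⟨hU, hW, hne⟩
  rcases hne.lt_or_gt with hlt | hlt
  · exact hG.not_card_inter_lt hdeg hf (hG.inter_left_nonempty_of_not_subset_right hW) hlt
  · exact hG.swap.not_card_inter_lt hdeg.symm hf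
      (hG.swap.inter_left_nonempty_of_not_subset_right hU) hlt
end
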